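/- The conjugation map Conj on Dyck paths of size n is an anti-automorphism of the Tamari lattice: for all Dyck paths P, Q of size n, P ≤ Q in the Tamari order if and only if Conj(Q) ≤ Conj(P). -/
import Mathlib


/-- A step of a Dyck path: `u` (up) or `d` (down). -/
inductive Step where
  | u : Step
  | d : Step
deriving DecidableEq, Repr

open Step

/-- Number of up steps of a word. -/
def countU (w : List Step) : ℕ := w.count u

/-- Number of down steps of a word. -/
def countD (w : List Step) : ℕ := w.count d

/-- A word over {u,d} is a Dyck path if it has as many u's as d's and
every prefix has at least as many u's as d's. -/
def IsDyck (w : List Step) : Prop :=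
  countU w = countD w ∧ ∀ p : List Step, p <+: w → countD p ≤ countU p

/-- Number of occurrences of the two-letter factor `ab` in `w`. -/
def pairCount (a b : Step) (w : List Step) : ℕ := (w.zip w.tail).count (a, b)

/-- The conjugation relation on Dyck paths: `ConjRel P Q` holds iff `Q` is the
conjugate of `P`, following the recursive definition `Conj(∅) = ∅` and
`Conj(P1 u P2 d) = Conj(P2) u Conj(P1) d` over the unique last-arch
decomposition of non-empty Dyck paths. -/
inductive ConjRel : List Step → List Step → Prop
  | nil : ConjRel [] []
  | arch {P1 P2 Q1 Q2 : List Step} :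
      IsDyck P1 → IsDyck P2 → ConjRel P1 Q1 → ConjRel P2 Q2 →
      ConjRel (P1 ++ [Step.u] ++ P2 ++ [Step.d]) (Q2 ++ [Step.u] ++ Q1 ++ [Step.d])

/-- The right-rotation covering relation of the Tamari lattice:
`P = V d P1 W` is turned into `P' = V P1 d W` where `P1` is a non-empty
Dyck path. -/
def Rotation (P P' : List Step) : Prop :=
  ∃ V W P1 : List Step, IsDyck P1 ∧ P1 ≠ [] ∧
    P = V ++ [Step.d] ++ P1 ++ W ∧ P' = V ++ P1 ++ [Step.d] ++ W

/-- The Tamari order: reflexive-transitive closure of right rotation. -/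
def Tamari : List Step → List Step → Prop := Relation.ReflTransGen Rotation

section Aux

lemma cuA (a b : List Step) : countU (a ++ b) = countU a + countU b := by
  simp [countU, List.count_append]

lemma cdA (a b : List Step) : countD (a ++ b) = countD a + countD b := by
  simp [countD, List.count_append]

@[simp] lemma cu_nil : countU ([] : List Step) = 0 := rfl
@[simp] lemma cd_nil : countD ([] : List Step) = 0 := rfl
@[simp] lemma cuU : countU [Step.u] = 1 := by decide
@[simp] lemma cuD : countU [Step.d] = 0 := by decide
@[simp] lemma cdU : countD [Step.u] = 0 := by decide
@[simp] lemma cdD : countD [Step.d] = 1 := by decide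

/-- prefix split helper -/
lemma prefix_split {p a b : List Step} (h : p <+: a ++ b) :
    p <+: a ∨ ∃ q, q <+: b ∧ p = a ++ q := by
  rcases le_total p.length a.length with hl | hl
  · exact Or.inl (List.prefix_of_prefix_length_le h (a.prefix_append b) hl)
  · have ha : a <+: p := List.prefix_of_prefix_length_le (a.prefix_append b) h hl
    obtain ⟨q, rfl⟩ := ha
    obtain ⟨t, ht⟩ := h
    rw [List.append_assoc] at ht
    have := List.append_cancel_left ht
    exact Or.inr ⟨q, ⟨t, this⟩, rfl⟩

lemma append_cases {a b c e : List Step} (h : a ++ b = c ++ e) :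
    (∃ X, c = a ++ X ∧ b = X ++ e) ∨ (∃ X, a = c ++ X ∧ e = X ++ b) :=
  List.append_eq_append_iff.mp h

lemma count_le_of_prefix {p w : List Step} (h : p <+: w) :
    countU p ≤ countU w ∧ countD p ≤ countD w :=
  ⟨h.sublist.count_le _, h.sublist.count_le _⟩

lemma isDyck_nil : IsDyck [] := ⟨rfl, by intro p hp; simp [List.prefix_nil.mp hp]⟩

lemma isDyck_append {a b : List Step} (ha : IsDyck a) (hb : IsDyck b) : IsDyck (a ++ b) := by
  constructor
  · rw [cuA, cdA, ha.1, hb.1]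
  · intro p hp
    rcases prefix_split hp with h | ⟨q, hq, rfl⟩
    · exact ha.2 p h
    · have := hb.2 q hq
      rw [cuA, cdA]
      have := ha.1; omega

lemma isDyck_arch {a b : List Step} (ha : IsDyck a) (hb : IsDyck b) :
    IsDyck (a ++ [Step.u] ++ b ++ [Step.d]) := by
  constructor
  · simp only [cuA, cdA, cuU, cuD, cdU, cdD, ha.1, hb.1]; omega
  · intro p hp
    rw [List.append_assoc, List.append_assoc] at hp
    rcases prefix_split hp with h | ⟨q, hq, rfl⟩
    · exact ha.2 p h
    · rcases prefix_split hq with h | ⟨q1, hq1, rfl⟩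
      · have hc := count_le_of_prefix h
        simp only [cuU, cdU] at hc
        have := ha.1
        rw [cuA, cdA]; omega
      · rcases prefix_split hq1 with h | ⟨q2, hq2, rfl⟩
        · have := hb.2 q1 h
          have h1 := ha.1
          simp only [cuA, cdA, cuU, cdU]; omega
        · have hc := count_le_of_prefix hq2
          simp only [cuD, cdD] at hc
          have h1 := ha.1; have h2 := hb.1
          simp only [cuA, cdA, cuU, cdU]; omega

lemma isDyck_ends {w : List Step} (h : IsDyck w) (hne : w ≠ []) :
    ∃ w0, w = w0 ++ [Step.d] := by
  rcases List.eq_nil_or_concat w with rfl | ⟨w0, c, hc⟩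
  · exact absurd rfl hne
  rw [List.concat_eq_append] at hc
  cases c
  · exfalso
    have hp := h.2 w0 ⟨[Step.u], hc.symm⟩
    have hb := h.1
    rw [hc, cuA, cdA] at hb
    simp at hb; omega
  · exact ⟨w0, hc⟩

def PrefOK (v : List Step) : Prop := ∀ p : List Step, p <+: v → countD p ≤ countU p

lemma prefOK_of_prefix {a v : List Step} (h : PrefOK v) (ha : a <+: v) : PrefOK a :=
  fun p hp => h p (hp.trans ha)

lemma split_last : ∀ n (v : List Step) (k : ℕ), v.length ≤ n → PrefOK v →
    countU v = countD v + (k + 1) →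
    ∃ A B, v = A ++ [Step.u] ++ B ∧ PrefOK A ∧ countU A = countD A + k ∧ IsDyck B := by
  intro n
  induction n with
  | zero =>
    intro v k hl _ hb
    have : v = [] := List.length_eq_zero_iff.mp (Nat.le_zero.mp hl)
    subst this; simp at hb
  | succ m ih =>
    intro v k hl hp hb
    rcases List.eq_nil_or_concat v with rfl | ⟨v0, c, hc⟩
    · simp at hb
    rw [List.concat_eq_append] at hc
    subst hc
    have hl0 : v0.length ≤ m := by simp at hl; omega
    cases c
    · -- ends with u
      refine ⟨v0, [], by simp, prefOK_of_prefix hp ⟨[Step.u], rfl⟩, ?_, isDyck_nil⟩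
      rw [cuA, cdA] at hb; simp at hb; omega
    · -- ends with d
      have hb0 : countU v0 = countD v0 + (k + 1 + 1) := by
        rw [cuA, cdA] at hb; simp at hb; omega
      obtain ⟨A', B', hv0, hpA', hbA', hB'⟩ :=
        ih v0 (k + 1) hl0 (prefOK_of_prefix hp ⟨[Step.d], rfl⟩) hb0
      have hlA' : A'.length ≤ m := by
        have := congrArg List.length hv0
        simp at this; omega
      obtain ⟨A'', B'', hA', hpA'', hbA'', hB''⟩ := ih A' k hlA' hpA' hbA'
      refine ⟨A'', B'' ++ [Step.u] ++ B' ++ [Step.d], ?_, hpA'', hbA'', isDyck_arch hB'' hB'⟩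
      rw [hv0, hA']; simp [List.append_assoc]

lemma lastArch {w : List Step} (h : IsDyck w) (hne : w ≠ []) :
    ∃ A B, IsDyck A ∧ IsDyck B ∧ w = A ++ [Step.u] ++ B ++ [Step.d] := by
  obtain ⟨w0, rfl⟩ := isDyck_ends h hne
  have hp0 : PrefOK w0 := prefOK_of_prefix h.2 ⟨[Step.d], rfl⟩
  have hb0 : countU w0 = countD w0 + (0 + 1) := by
    have := h.1; rw [cuA, cdA] at this; simp at this; omega
  obtain ⟨A, B, hv, hpA, hbA, hB⟩ := split_last w0.length w0 0 le_rfl hp0 hb0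
  exact ⟨A, B, ⟨by omega, hpA⟩, hB, by rw [hv]⟩

lemma firstArch : ∀ n (w : List Step), w.length ≤ n → IsDyck w → w ≠ [] →
    ∃ E D2, IsDyck E ∧ IsDyck D2 ∧ w = [Step.u] ++ E ++ [Step.d] ++ D2 := by
  intro n
  induction n with
  | zero =>
    intro w hl _ hne
    exact absurd (List.length_eq_zero_iff.mp (Nat.le_zero.mp hl)) hne
  | succ m ih =>
    intro w hl hw hne
    obtain ⟨A, B, hA, hB, rfl⟩ := lastArch hw hne
    by_cases hA0 : A = []
    · subst hA0
      exact ⟨B, [], hB, isDyck_nil, by simp⟩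
    · have hlA : A.length ≤ m := by simp at hl; omega
      obtain ⟨E, D2, hE, hD2, hAeq⟩ := ih A hlA hA hA0
      refine ⟨E, D2 ++ [Step.u] ++ B ++ [Step.d], hE, isDyck_arch hD2 hB, ?_⟩
      rw [hAeq]; simp [List.append_assoc]

/-- Binary trees. -/
inductive Tr where
  | leaf : Tr
  | node : Tr → Tr → Tr

open Tr

def dy : Tr → List Step
  | .leaf => []
  | .node l r => dy l ++ [Step.u] ++ dy r ++ [Step.d]

def mir : Tr → Tr
  | .leaf => .leaf
  | .node l r => .node (mir r) (mir l)

lemma mir_mir (t : Tr) : mir (mir t) = t := by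
  induction t with
  | leaf => rfl
  | node l r ihl ihr => simp [mir, ihl, ihr]

lemma isDyck_dy (t : Tr) : IsDyck (dy t) := by
  induction t with
  | leaf => exact isDyck_nil
  | node l r ihl ihr => exact isDyck_arch ihl ihr

lemma dy_eq_nil {t : Tr} (h : dy t = []) : t = .leaf := by
  cases t with
  | leaf => rfl
  | node l r => simp [dy] at h

/-- uniqueness of the last-arch decomposition -/
lemma arch_unique_aux {P1 P2 P1' P2' X : List Step} (h2 : IsDyck P2)
    (h1b : countU P1 = countD P1) (h1b' : countU P1' = countD P1')
    (hX : P1' ++ [Step.u] = P1 ++ [Step.u] ++ X) (hP2 : P2 = X ++ P2') : X = [] := by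
  by_contra hne
  rcases List.eq_nil_or_concat X with rfl | ⟨X0, c, hc⟩
  · exact hne rfl
  rw [List.concat_eq_append] at hc
  subst hc
  -- last char of LHS is u, so c = u
  have hc' : P1' ++ [Step.u] = (P1 ++ [Step.u] ++ X0) ++ [c] := by
    rw [hX]; simp [List.append_assoc]
  obtain ⟨-, hcu⟩ := List.append_inj' hc' (by simp)
  have hcu : c = Step.u := by simpa using hcu.symm
  subst hcu
  -- counts: X balanced
  have e1 := congrArg countU hX
  have e2 := congrArg countD hX
  simp only [cuA, cdA, cuU, cdU] at e1 e2
  -- X0 is a prefix of P2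
  have hpre : X0 <+: P2 := ⟨[Step.u] ++ P2', by rw [hP2]; simp [List.append_assoc]⟩
  have := h2.2 X0 hpre
  omega

lemma arch_unique {P1 P2 P1' P2' : List Step} (h1 : IsDyck P1) (h2 : IsDyck P2)
    (h1' : IsDyck P1') (h2' : IsDyck P2')
    (he : P1 ++ [Step.u] ++ P2 ++ [Step.d] = P1' ++ [Step.u] ++ P2' ++ [Step.d]) :
    P1 = P1' ∧ P2 = P2' := by
  have he2 : (P1 ++ [Step.u]) ++ P2 = (P1' ++ [Step.u]) ++ P2' := by
    have h' : ((P1 ++ [Step.u]) ++ P2) ++ [Step.d] = ((P1' ++ [Step.u]) ++ P2') ++ [Step.d] := by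
      simpa [List.append_assoc] using he
    exact (List.append_inj' h' (by simp)).1
  rcases append_cases he2 with ⟨X, hc, hb⟩ | ⟨X, hc, hb⟩
  · -- P1' ++ [u] = (P1 ++ [u]) ++ X, P2 = X ++ P2'
    have hX : X = [] := arch_unique_aux h2 h1.1 h1'.1 (by rw [hc, List.append_assoc]) hb
    subst hX
    simp only [List.append_nil] at hc
    simp only [List.nil_append] at hb
    exact ⟨(List.append_inj' hc (by simp)).1.symm, hb⟩
  · have hX : X = [] := arch_unique_aux h2' h1'.1 h1.1 (by rw [hc, List.append_assoc]) hb
    subst hX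
    simp only [List.append_nil] at hc
    simp only [List.nil_append] at hb
    exact ⟨(List.append_inj' hc (by simp)).1, hb.symm⟩

lemma dy_inj : ∀ t s : Tr, dy t = dy s → t = s := by
  intro t
  induction t with
  | leaf =>
    intro s h
    exact (dy_eq_nil h.symm).symm
  | node l r ihl ihr =>
    intro s h
    cases s with
    | leaf => simp [dy] at h
    | node l' r' =>
      obtain ⟨h1, h2⟩ := arch_unique (isDyck_dy l) (isDyck_dy r) (isDyck_dy l') (isDyck_dy r') h
      rw [ihl _ h1, ihr _ h2]

lemma exists_tree : ∀ n (w : List Step), w.length ≤ n → IsDyck w → ∃ t, dy t = w := by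
  intro n
  induction n with
  | zero =>
    intro w hl _
    exact ⟨.leaf, (List.length_eq_zero_iff.mp (Nat.le_zero.mp hl)).symm⟩
  | succ m ih =>
    intro w hl hw
    by_cases hne : w = []
    · exact ⟨.leaf, hne.symm⟩
    obtain ⟨A, B, hA, hB, rfl⟩ := lastArch hw hne
    have hlen := hl
    simp at hlen
    obtain ⟨ta, hta⟩ := ih A (by omega) hA
    obtain ⟨tb, htb⟩ := ih B (by omega) hB
    exact ⟨.node ta tb, by simp [dy, hta, htb]⟩

lemma conj_eq_mirror {w w' : List Step} (h : ConjRel w w') :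
    ∀ t : Tr, dy t = w → w' = dy (mir t) := by
  induction h with
  | nil =>
    intro t ht
    rw [dy_eq_nil ht]; rfl
  | arch h1 h2 hc1 hc2 ih1 ih2 =>
    intro t ht
    cases t with
    | leaf => simp [dy] at ht
    | node L R =>
      obtain ⟨e1, e2⟩ := arch_unique (isDyck_dy L) (isDyck_dy R) h1 h2 ht
      have hd : dy (mir (Tr.node L R)) = dy (mir R) ++ [Step.u] ++ dy (mir L) ++ [Step.d] := rfl
      rw [hd, ← ih1 L e1, ← ih2 R e2]

/-- single tree rotation, contextual closure -/
inductive TRot : Tr → Tr → Prop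
  | root (a b c : Tr) : TRot (.node (.node a b) c) (.node a (.node b c))
  | left {l l' : Tr} (r : Tr) : TRot l l' → TRot (.node l r) (.node l' r)
  | right (l : Tr) {r r' : Tr} : TRot r r' → TRot (.node l r) (.node l r')

lemma rotation_context {x y : List Step} (L R : List Step) (h : Rotation x y) :
    Rotation (L ++ x ++ R) (L ++ y ++ R) := by
  obtain ⟨V, W, D, hD, hne, rfl, rfl⟩ := h
  exact ⟨L ++ V, W ++ R, D, hD, hne, by simp [List.append_assoc], by simp [List.append_assoc]⟩

lemma trot_rotation {t t' : Tr} (h : TRot t t') : Rotation (dy t) (dy t') := by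
  induction h with
  | root a b c =>
    refine ⟨dy a ++ [Step.u] ++ dy b, [], [Step.u] ++ dy c ++ [Step.d], ?_, by simp, ?_, ?_⟩
    · have := isDyck_arch isDyck_nil (isDyck_dy c); simpa using this
    · simp [dy, List.append_assoc]
    · simp [dy, List.append_assoc]
  | left r h ih =>
    have := rotation_context [] ([Step.u] ++ dy r ++ [Step.d]) ih
    simpa [dy, List.append_assoc] using this
  | right l h ih =>
    have := rotation_context (dy l ++ [Step.u]) [Step.d] ih
    simpa [dy, List.append_assoc] using this

end Aux

section Key
open Tr

lemma cuCu (l : List Step) : countU (Step.u :: l) = countU l + 1 := by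
  simp [countU, List.count_cons]
lemma cuCd (l : List Step) : countU (Step.d :: l) = countU l := by
  simp [countU, List.count_cons]
lemma cdCu (l : List Step) : countD (Step.u :: l) = countD l := by
  simp [countD, List.count_cons]
lemma cdCd (l : List Step) : countD (Step.d :: l) = countD l + 1 := by
  simp [countD, List.count_cons]

lemma key_step : ∀ (t : Tr) (V E W : List Step), IsDyck E →
    dy t = V ++ [Step.d] ++ [Step.u] ++ E ++ [Step.d] ++ W →
    ∃ t', TRot t t' ∧ dy t' = V ++ [Step.u] ++ E ++ [Step.d] ++ [Step.d] ++ W := by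
  intro t
  induction t with
  | leaf =>
    intro V E W _ h
    exfalso
    have := congrArg List.length h
    simp [dy] at this
  | node l r ihl ihr =>
    intro V E W hE h
    simp only [dy] at h
    rcases List.eq_nil_or_concat W with rfl | ⟨W0, c, hc⟩
    · -- W = []
      have h2 : dy l ++ ([Step.u] ++ dy r) = V ++ ([Step.d] ++ ([Step.u] ++ E)) := by
        have h' : (dy l ++ ([Step.u] ++ dy r)) ++ [Step.d]
            = (V ++ ([Step.d] ++ ([Step.u] ++ E))) ++ [Step.d] := by
          simpa [List.append_assoc] using h
        exact (List.append_inj' h' rfl).1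
      rcases append_cases h2 with ⟨X, hV, hb⟩ | ⟨X, hl2, hb⟩
      · -- V = dy l ++ X,  [u] ++ dy r = X ++ ([d] ++ [u] ++ E)
        cases X with
        | nil => exfalso; simp at hb
        | cons x0 X' =>
          exfalso
          simp only [List.cons_append, List.singleton_append] at hb
          injection hb with hx htl
          simp only [List.append_eq, List.nil_append] at htl
          have e1 := congrArg countU htl
          have e2 := congrArg countD htl
          simp only [cuA, cdA, cuCu, cuCd, cdCu, cdCd, cuU, cuD, cdU, cdD] at e1 e2
          have hpre : (X' ++ [Step.d]) <+: dy r :=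
            ⟨Step.u :: E, by rw [htl]; simp [List.append_assoc]⟩
          have hp := (isDyck_dy r).2 _ hpre
          simp only [cuA, cdA, cuU, cuD, cdU, cdD] at hp
          have hr := (isDyck_dy r).1
          have hEb := hE.1
          omega
      · -- dy l = V ++ X,  [d] ++ [u] ++ E = X ++ ([u] ++ dy r)
        cases X with
        | nil => exfalso; simp at hb
        | cons x0 X1 =>
          simp only [List.cons_append, List.singleton_append] at hb
          injection hb with hx htl
          subst hx
          cases X1 with
          | nil =>
            -- root rotation case: dy l = V ++ [d], E = dy r
            simp only [List.nil_append] at htl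
            injection htl with _ hEr
            cases l with
            | leaf => exfalso; simp [dy] at hl2
            | node l1 l2 =>
              simp only [dy] at hl2
              have hl2' : (dy l1 ++ [Step.u] ++ dy l2) ++ [Step.d] = V ++ [Step.d] := by
                simpa [List.append_assoc] using hl2
              have hV : dy l1 ++ [Step.u] ++ dy l2 = V := (List.append_inj' hl2' rfl).1
              refine ⟨.node l1 (.node l2 r), TRot.root l1 l2 r, ?_⟩
              rw [← hV, hEr]
              simp [dy, List.append_assoc]
          | cons x1 X2 =>
            exfalso
            injection htl with hx1 htl2
            simp only [List.append_eq, List.nil_append] at htl2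
            have e1 := congrArg countU htl2
            have e2 := congrArg countD htl2
            simp only [cuA, cdA, cuCu, cuCd, cdCu, cdCd, cuU, cuD, cdU, cdD] at e1 e2
            have hpre : X2 <+: E := ⟨Step.u :: dy r, htl2.symm⟩
            have hp := hE.2 _ hpre
            have hr := (isDyck_dy r).1
            have hEb := hE.1
            omega
    · -- W = W0 ++ [c]
      rw [List.concat_eq_append] at hc
      subst hc
      have h' : (dy l ++ [Step.u] ++ dy r) ++ [Step.d]
          = (V ++ [Step.d] ++ [Step.u] ++ E ++ [Step.d] ++ W0) ++ [c] := by
        simpa [List.append_assoc] using h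
      obtain ⟨h2, hcd⟩ := List.append_inj' h' rfl
      injection hcd with hcd'
      subst hcd'
      have h3 : dy l ++ ([Step.u] ++ dy r)
          = V ++ ([Step.d] ++ ([Step.u] ++ (E ++ ([Step.d] ++ W0)))) := by
        simpa [List.append_assoc] using h2
      rcases append_cases h3 with ⟨X, hV, hb⟩ | ⟨X, hl2, hb⟩
      · -- pattern inside r
        cases X with
        | nil => exfalso; simp at hb
        | cons x0 X' =>
          simp only [List.cons_append, List.singleton_append] at hb
          injection hb with hx htl
          subst hx
          simp only [List.append_eq, List.nil_append] at htl
          have hdr : dy r = X' ++ [Step.d] ++ [Step.u] ++ E ++ [Step.d] ++ W0 := by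
            rw [htl]; simp [List.append_assoc]
          obtain ⟨r', hrot, hdr'⟩ := ihr X' E W0 hE hdr
          refine ⟨.node l r', TRot.right l hrot, ?_⟩
          rw [hV]
          simp only [dy, hdr']
          simp [List.append_assoc]
      · cases X with
        | nil => exfalso; simp at hb
        | cons x0 X1 =>
          simp only [List.cons_append, List.singleton_append] at hb
          injection hb with hx htl
          subst hx
          cases X1 with
          | nil =>
            -- E ++ [d] ++ W0 = dy r : contradiction via prefix E ++ [d]
            exfalso
            simp only [List.nil_append] at htl
            injection htl with _ hEr
            have hpre : (E ++ [Step.d]) <+: dy r :=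
              ⟨W0, by rw [← hEr]; simp [List.append_assoc]⟩
            have hp := (isDyck_dy r).2 _ hpre
            simp only [cuA, cdA, cuU, cuD, cdU, cdD] at hp
            have hEb := hE.1
            omega
          | cons x1 X2 =>
            injection htl with hx1 htl2
            subst hx1
            -- htl2 : E ++ ([d] ++ W0) = X2 ++ (u :: dy r)
            have htl3 : E ++ ([Step.d] ++ W0) = X2 ++ (Step.u :: dy r) := by
              simpa using htl2
            rcases append_cases htl3 with ⟨Y, hX2, hdW⟩ | ⟨Y, hE2, hY⟩
            · -- X2 = E ++ Y, [d] ++ W0 = Y ++ (u :: dy r)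
              cases Y with
              | nil => exfalso; simp at hdW
              | cons y Y1 =>
                simp only [List.cons_append, List.singleton_append] at hdW
                injection hdW with hy hW0
                subst hy
                simp only [List.append_eq, List.nil_append] at hW0
                -- pattern inside l
                have hdl : dy l = V ++ [Step.d] ++ [Step.u] ++ E ++ [Step.d] ++ Y1 := by
                  rw [hl2, hX2]; simp [List.append_assoc]
                obtain ⟨l', hrot, hdl'⟩ := ihl V E Y1 hE hdl
                refine ⟨.node l' r, TRot.left r hrot, ?_⟩
                simp only [dy, hdl']
                rw [hW0]
                simp [List.append_assoc]
            · -- E = X2 ++ Y, u :: dy r = Y ++ ([d] ++ W0)  : contradiction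
              exfalso
              cases Y with
              | nil => simp at hY
              | cons y Y1 =>
                simp only [List.cons_append, List.singleton_append] at hY
                injection hY with hy hr1
                subst hy
                -- hr1 : dy r = Y1 ++ (d :: W0), hE2 : E = X2 ++ (u :: Y1)
                have e1 := congrArg countU hE2
                have e2 := congrArg countD hE2
                simp only [cuA, cdA, cuCu, cuCd, cdCu, cdCd] at e1 e2
                have hpre1 : X2 <+: E := ⟨Step.u :: Y1, hE2.symm⟩
                have hp1 := hE.2 _ hpre1
                have hpre2 : (Y1 ++ [Step.d]) <+: dy r :=
                  ⟨W0, by rw [hr1]; simp [List.append_assoc]⟩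
                have hp2 := (isDyck_dy r).2 _ hpre2
                simp only [cuA, cdA, cuU, cuD, cdU, cdD] at hp2
                have hEb := hE.1
                omega

end Key

section Main
open Tr

lemma rotate_steps : ∀ n (D : List Step), D.length ≤ n → IsDyck D → D ≠ [] →
    ∀ (t : Tr) (V W : List Step), dy t = V ++ [Step.d] ++ D ++ W →
    ∃ t', Relation.ReflTransGen TRot t t' ∧ dy t' = V ++ D ++ [Step.d] ++ W := by
  intro n
  induction n with
  | zero =>
    intro D hl _ hne
    exact absurd (List.length_eq_zero_iff.mp (Nat.le_zero.mp hl)) hne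
  | succ m ih =>
    intro D hl hD hne t V W ht
    obtain ⟨E, D2, hE, hD2, rfl⟩ := firstArch D.length D le_rfl hD hne
    have ht' : dy t = V ++ [Step.d] ++ [Step.u] ++ E ++ [Step.d] ++ (D2 ++ W) := by
      rw [ht]; simp [List.append_assoc]
    obtain ⟨t1, hrot1, hdt1⟩ := key_step t V E (D2 ++ W) hE ht'
    by_cases hD2n : D2 = []
    · subst hD2n
      refine ⟨t1, Relation.ReflTransGen.single hrot1, ?_⟩
      rw [hdt1]; simp [List.append_assoc]
    · have hlen : D2.length ≤ m := by
        have := hl; simp at this; omega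
      have hdt1' : dy t1 = (V ++ [Step.u] ++ E ++ [Step.d]) ++ [Step.d] ++ D2 ++ W := by
        rw [hdt1]; simp [List.append_assoc]
      obtain ⟨t', hrtg, hdt'⟩ := ih D2 hlen hD2 hD2n t1 (V ++ [Step.u] ++ E ++ [Step.d]) W hdt1'
      refine ⟨t', Relation.ReflTransGen.head hrot1 hrtg, ?_⟩
      rw [hdt']; simp [List.append_assoc]

lemma tamari_to_trot {t : Tr} {w : List Step} (h : Tamari (dy t) w) :
    ∃ t', Relation.ReflTransGen TRot t t' ∧ dy t' = w := by
  induction h with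
  | refl => exact ⟨t, Relation.ReflTransGen.refl, rfl⟩
  | tail hab hbc ih =>
    obtain ⟨tb, htb, rfl⟩ := ih
    obtain ⟨V, W, D, hD, hne, hb, rfl⟩ := hbc
    obtain ⟨tc, htc, hdc⟩ := rotate_steps D.length D le_rfl hD hne tb V W hb
    exact ⟨tc, htb.trans htc, hdc⟩

lemma trot_mirror {a b : Tr} (h : TRot a b) : TRot (mir b) (mir a) := by
  induction h with
  | root a b c =>
    have := TRot.root (mir c) (mir b) (mir a)
    simpa [mir] using this
  | left r h ih =>
    have := TRot.right (mir r) ih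
    simpa [mir] using this
  | right l h ih =>
    have := TRot.left (mir l) ih
    simpa [mir] using this

lemma rtg_trot_mirror {a b : Tr} (h : Relation.ReflTransGen TRot a b) :
    Relation.ReflTransGen TRot (mir b) (mir a) := by
  induction h with
  | refl => exact Relation.ReflTransGen.refl
  | tail hab hbc ih => exact Relation.ReflTransGen.head (trot_mirror hbc) ih

lemma rtg_trot_tamari {a b : Tr} (h : Relation.ReflTransGen TRot a b) :
    Tamari (dy a) (dy b) := by
  induction h with
  | refl => exact Relation.ReflTransGen.refl
  | tail hab hbc ih => exact ih.tail (trot_rotation hbc)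

end Main


/-- Conjugation is an anti-automorphism of the Tamari lattice on
Dyck paths of size `n`: `P ≤ Q` iff `Conj(Q) ≤ Conj(P)`. -/
theorem conj_antiautomorphism (n : ℕ) (P Q P' Q' : List Step)
    (hP : IsDyck P) (hQ : IsDyck Q) (hPn : countU P = n) (hQn : countU Q = n)
    (hcP : ConjRel P P') (hcQ : ConjRel Q Q') :
    Tamari P Q ↔ Tamari Q' P' := by

  obtain ⟨T, hT⟩ := exists_tree P.length P le_rfl hP
  obtain ⟨S, hS⟩ := exists_tree Q.length Q le_rfl hQ
  have hP' : P' = dy (mir T) := conj_eq_mirror hcP T hT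
  have hQ' : Q' = dy (mir S) := conj_eq_mirror hcQ S hS
  constructor
  · intro h
    rw [← hT] at h
    obtain ⟨T', hT', hd⟩ := tamari_to_trot h
    have hTS : T' = S := dy_inj _ _ (hd.trans hS.symm)
    subst hTS
    rw [hP', hQ']
    exact rtg_trot_tamari (rtg_trot_mirror hT')
  · intro h
    rw [hP', hQ'] at h
    obtain ⟨X, hX, hdX⟩ := tamari_to_trot h
    have hXT : X = mir T := dy_inj _ _ hdX
    subst hXT
    have h2 := rtg_trot_mirror hX
    rw [mir_mir, mir_mir] at h2
    rw [← hT, ← hS]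
    exact rtg_trot_tamari h2
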